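/- Let f be a Boolean network of dimension n and x ∈ 𝔹^n. For L ⊆ {1,…,n}, let ẑ^L ∈ P^n be the configuration obtained from x by exhaustively applying, to components outside L only, transitions from Boolean to dynamic states under the most permissive semantics (this configuration is uniquely defined). Then for any y ∈ 𝔹^n: y ∈ Reach_f(x) if and only if there exists L ⊆ {1,…,n} such that y ∈ γ(ẑ^L) and for every component i with ẑ^L_i ∉ 𝔹 there exists z ∈ γ(ẑ^L) with f_i(z) = y_i. -/

import Mathlib

inductive PState : Type
  | zero | up | down | one
deriving DecidableEq

def PState.ofBool : Bool → PState
  | false => .zero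
  | true  => .one

def PState.isBool (p : PState) : Prop := p = .zero ∨ p = .one

abbrev BN (n : ℕ) := (Fin n → Bool) → Fin n → Bool

def gamma {n : ℕ} (x : Fin n → PState) : Set (Fin n → Bool) :=
  {b | ∀ i (v : Bool), x i = PState.ofBool v → b i = v}

def mpStep {n : ℕ} (f : BN n) (x y : Fin n → PState) : Prop :=
  ∃ i : Fin n, x i ≠ y i ∧ (∀ j, j ≠ i → x j = y j) ∧
    ((y i = .up ∧ x i ≠ .one ∧ ∃ z ∈ gamma x, f z i = true) ∨
     (y i = .one ∧ x i = .up) ∨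
     (y i = .down ∧ x i ≠ .zero ∧ ∃ z ∈ gamma x, f z i = false) ∨
     (y i = .zero ∧ x i = .down))

def mpReachP {n : ℕ} (f : BN n) : (Fin n → PState) → (Fin n → PState) → Prop :=
  Relation.ReflTransGen (mpStep f)

def embed {n : ℕ} (x : Fin n → Bool) : Fin n → PState := fun i => PState.ofBool (x i)

def mpReach {n : ℕ} (f : BN n) (x : Fin n → Bool) : Set (Fin n → Bool) :=
  {y | mpReachP f (embed x) (embed y)}

def cubeSet {n : ℕ} (h : Fin n → Option Bool) : Set (Fin n → Bool) :=
  {z | ∀ i b, h i = some b → z i = b}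

def smaller {n : ℕ} (h h' : Fin n → Option Bool) : Prop :=
  ∀ i b, h' i = some b → h i = some b

def kClosed {n : ℕ} (f : BN n) (K : Finset (Fin n)) (h : Fin n → Option Bool) : Prop :=
  ∀ z ∈ cubeSet h, ∀ i ∈ K, h i = none ∨ h i = some (f z i)

def closedBy {n : ℕ} (f : BN n) (h : Fin n → Option Bool) : Prop :=
  ∀ z ∈ cubeSet h, f z ∈ cubeSet h

def smallestClosed {n : ℕ} (f : BN n) (x : Fin n → Bool) (h : Fin n → Option Bool) : Prop :=
  x ∈ cubeSet h ∧ closedBy f h ∧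
    ∀ h', x ∈ cubeSet h' → closedBy f h' → smaller h h'

def minClosed {n : ℕ} (f : BN n) (h : Fin n → Option Bool) : Prop :=
  closedBy f h ∧ ∀ h', closedBy f h' → smaller h' h → h' = h

def faStep {n : ℕ} (f : BN n) (x y : Fin n → Bool) : Prop :=
  ∃ i : Fin n, x i ≠ y i ∧ (∀ j, j ≠ i → x j = y j) ∧ y i = f x i

def aStep {n : ℕ} (f : BN n) (x y : Fin n → Bool) : Prop :=
  x ≠ y ∧ ∀ i, x i ≠ y i → y i = f x i

def mnStep {n m : ℕ} (F : (Fin n → Fin (m+1)) → Fin n → ℤ)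
    (x y : Fin n → Fin (m+1)) : Prop :=
  x ≠ y ∧ ∀ i, x i ≠ y i → ((y i : ℤ) = (x i : ℤ) + F x i)

def beta {n m : ℕ} (x : Fin n → Fin (m+1)) : Set (Fin n → Bool) :=
  {b | ∀ i, ((x i : ℕ) = 0 → b i = false) ∧ ((x i : ℕ) = m → b i = true)}

def refines {n m : ℕ} (F : (Fin n → Fin (m+1)) → Fin n → ℤ) (f : BN n) : Prop :=
  ∀ x i, (F x i > 0 → ∃ b ∈ beta x, f b i = true) ∧
         (F x i < 0 → ∃ b ∈ beta x, f b i = false)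

def alpha {n m : ℕ} (x : Fin n → Fin (m+1)) : Set (Fin n → PState) :=
  {p | ∀ i, ((x i : ℕ) = 0 ↔ p i = .zero) ∧ ((x i : ℕ) = m ↔ p i = .one)}

def bdStep {n : ℕ} (f : BN n) (L : Finset (Fin n)) (a b : Fin n → PState) : Prop :=
  mpStep f a b ∧ ∃ j, a j ≠ b j ∧ j ∉ L ∧ (a j).isBool ∧ ¬ (b j).isBool

def exhaustive {n : ℕ} (f : BN n) (x : Fin n → Bool) (L : Finset (Fin n))
    (zhat : Fin n → PState) : Prop :=
  Relation.ReflTransGen (bdStep f L) (embed x) zhat ∧ ∀ z', ¬ bdStep f L zhat z'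


/-!
(⇐) Run `embed x` into `ẑ^L`, then turn every dynamic component `i` of `ẑ^L` towards `y i`:
these moves leave the Boolean components of `ẑ^L` untouched, so `γ` only grows and the
witnesses stay available. Finally let every component settle to `y i`.

(⇒) Along a run from `x`, maintain a closure `ẑ^L` in which every component outside `L` is
dynamic and which explains the current configuration `c`: `c` agrees with `ẑ^L` on its Boolean
components, and for every other component the value `c` is at or heading to is realised by `f`
on `γ(ẑ^L)`. A run step that frees a component that is still Boolean in `ẑ^L` is also a
Boolean-to-dynamic step from `ẑ^L`, so that component is taken out of `L`.
-/

namespace PState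

/-- The Boolean value a state is at or heading to. -/
def goal : PState → Bool
  | zero | down => false
  | one | up => true

def toward : Bool → PState
  | false => down
  | true => up

def redirect : PState → Bool → PState
  | zero, _ => zero
  | one, _ => one
  | _, b => toward b

lemma ofBool_injective : Function.Injective ofBool := by
  intro a b h
  cases a <;> cases b <;> simp_all [ofBool]

@[simp] lemma isBool_ofBool (b : Bool) : (ofBool b).isBool := by
  cases b <;> simp [ofBool, isBool]

@[simp] lemma not_isBool_toward (b : Bool) : ¬ (toward b).isBool := by
  cases b <;> simp [toward, isBool]

@[simp] lemma goal_ofBool (b : Bool) : (ofBool b).goal = b := by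
  cases b <;> rfl

@[simp] lemma goal_toward (b : Bool) : (toward b).goal = b := by
  cases b <;> rfl

lemma redirect_of_isBool {p : PState} (hp : p.isBool) (b : Bool) : p.redirect b = p := by
  rcases hp with rfl | rfl <;> rfl

lemma redirect_of_not_isBool {p : PState} (hp : ¬ p.isBool) (b : Bool) :
    p.redirect b = toward b := by
  cases p <;> simp_all [isBool, redirect]

end PState

open PState Function

section

variable {n : ℕ} {f : BN n}

lemma gamma_subset_gamma {c d : Fin n → PState} (h : ∀ i, (d i).isBool → c i = d i) :
    gamma c ⊆ gamma d := by
  intro z hz i v hv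
  exact hz i v ((h i (hv ▸ isBool_ofBool v)).trans hv)

lemma mem_gamma_embed (y : Fin n → Bool) : y ∈ gamma (embed y) :=
  fun _ _ hv => ofBool_injective hv

lemma goal_eq_of_mem_gamma {y : Fin n → Bool} {c : Fin n → PState} (hy : y ∈ gamma c)
    {i : Fin n} (hi : (c i).isBool) : (c i).goal = y i := by
  rcases hi with hi | hi
  · rw [hy i false hi, hi]; rfl
  · rw [hy i true hi, hi]; rfl

lemma goal_redirect_of_mem_gamma {y : Fin n → Bool} {c : Fin n → PState} (hy : y ∈ gamma c)
    (i : Fin n) : ((c i).redirect (y i)).goal = y i := by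
  by_cases hb : (c i).isBool
  · rw [redirect_of_isBool hb, goal_eq_of_mem_gamma hy hb]
  · rw [redirect_of_not_isBool hb, goal_toward]

def CoordStep (f : BN n) (c : Fin n → PState) (i : Fin n) (p : PState) : Prop :=
  (p = .up ∧ c i ≠ .one ∧ ∃ z ∈ gamma c, f z i = true) ∨
  (p = .one ∧ c i = .up) ∨
  (p = .down ∧ c i ≠ .zero ∧ ∃ z ∈ gamma c, f z i = false) ∨
  (p = .zero ∧ c i = .down)

lemma mpStep_iff {c c' : Fin n → PState} :
    mpStep f c c' ↔
      ∃ i, c i ≠ c' i ∧ (∀ j, j ≠ i → c j = c' j) ∧ CoordStep f c i (c' i) :=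
  Iff.rfl

lemma mpStep_update_iff {c : Fin n → PState} {i : Fin n} {p : PState} :
    mpStep f c (update c i p) ↔ c i ≠ p ∧ CoordStep f c i p := by
  constructor
  · rintro ⟨j, hne, -, hj⟩
    obtain rfl : j = i := by
      by_contra hji
      simp [hji] at hne
    rw [update_self] at hne hj
    exact ⟨hne, hj⟩
  · rintro ⟨hne, hi⟩
    exact ⟨i, by simpa, fun j hj => by simp [hj], by simpa⟩

namespace CoordStep

variable {c d : Fin n → PState} {i : Fin n} {p : PState} {b : Bool}

lemma mono (h : CoordStep f c i p) (hi : d i = c i) (hγ : gamma c ⊆ gamma d) :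
    CoordStep f d i p := by
  unfold CoordStep at h ⊢
  rw [hi]
  rcases h with ⟨hp, hc, z, hz, hfz⟩ | h | ⟨hp, hc, z, hz, hfz⟩ | h
  exacts [Or.inl ⟨hp, hc, z, hγ hz, hfz⟩, Or.inr (Or.inl h),
    Or.inr (Or.inr (Or.inl ⟨hp, hc, z, hγ hz, hfz⟩)), Or.inr (Or.inr (Or.inr h))]

lemma exists_of_not_isBool (h : CoordStep f c i p) (hp : ¬ p.isBool) :
    ∃ z ∈ gamma c, f z i = p.goal := by
  rcases h with ⟨rfl, -, hz⟩ | ⟨rfl, -⟩ | ⟨rfl, -, hz⟩ | ⟨rfl, -⟩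
  exacts [hz, absurd (Or.inr rfl) hp, hz, absurd (Or.inl rfl) hp]

lemma eq_toward_of_isBool (h : CoordStep f c i p) (hp : p.isBool) : c i = toward p.goal := by
  rcases h with ⟨rfl, -⟩ | ⟨rfl, hc⟩ | ⟨rfl, -⟩ | ⟨rfl, hc⟩
  exacts [absurd hp (by simp [isBool]), hc, absurd hp (by simp [isBool]), hc]

lemma not_isBool_of_isBool (h : CoordStep f c i p) (hc : (c i).isBool) : ¬ p.isBool := by
  intro hp
  rw [h.eq_toward_of_isBool hp] at hc
  exact not_isBool_toward _ hc

lemma of_goal_eq (hc : (c i).goal = b) (hne : c i ≠ ofBool b) :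
    CoordStep f c i (ofBool b) := by
  unfold CoordStep
  cases hci : c i <;> cases b <;> simp_all [goal, ofBool]

lemma toward_of_exists (hc : ¬ (c i).isBool) (hz : ∃ z ∈ gamma c, f z i = b) :
    CoordStep f c i (toward b) := by
  unfold CoordStep
  cases hci : c i <;> cases b <;> simp_all [isBool, toward]

end CoordStep

lemma mpReachP_of_coordStep {c t : Fin n → PState}
    (h : ∀ d : Fin n → PState, (∀ j, d j = c j ∨ d j = t j) →
      ∀ i, d i = c i → c i ≠ t i → CoordStep f d i (t i)) :
    mpReachP f c t := by
  classical
  have key : ∀ S : Finset (Fin n), Relation.ReflTransGen (mpStep f) c (S.piecewise t c) := by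
    intro S
    induction S using Finset.induction_on with
    | empty => simpa using Relation.ReflTransGen.refl
    | insert a S ha ih =>
      rw [Finset.piecewise_insert]
      have hda : S.piecewise t c a = c a := Finset.piecewise_eq_of_notMem _ _ _ ha
      by_cases hca : c a = t a
      · rwa [← hca, ← hda, update_eq_self]
      · have hbetween : ∀ j, S.piecewise t c j = c j ∨ S.piecewise t c j = t j := by
          intro j
          by_cases hj : j ∈ S <;> simp [Finset.piecewise, hj]
        exact ih.tail (mpStep_update_iff.2 ⟨hda ▸ hca, h _ hbetween a hda hca⟩)
  simpa [mpReachP] using key Finset.univ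

lemma mpReachP_redirect {zhat : Fin n → PState} {y : Fin n → Bool}
    (hwit : ∀ i, ¬ (zhat i).isBool → ∃ z ∈ gamma zhat, f z i = y i) :
    mpReachP f zhat (fun i => (zhat i).redirect (y i)) := by
  refine mpReachP_of_coordStep fun d hd i hdi hne => ?_
  have hdyn : ¬ (zhat i).isBool := fun hb => hne (redirect_of_isBool hb _).symm
  have hγ : gamma zhat ⊆ gamma d := gamma_subset_gamma fun j hj => by
    rcases hd j with h | h
    · exact h.symm
    · by_cases hb : (zhat j).isBool
      · rw [h, redirect_of_isBool hb]
      · rw [h, redirect_of_not_isBool hb] at hj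
        exact absurd hj (not_isBool_toward _)
  obtain ⟨z, hz, hfz⟩ := hwit i hdyn
  rw [redirect_of_not_isBool hdyn]
  exact CoordStep.toward_of_exists (hdi ▸ hdyn) ⟨z, hγ hz, hfz⟩

lemma mpReachP_embed {c : Fin n → PState} {y : Fin n → Bool} (h : ∀ i, (c i).goal = y i) :
    mpReachP f c (embed y) :=
  mpReachP_of_coordStep fun _ _ i hdi hne => CoordStep.of_goal_eq (hdi ▸ h i) (hdi ▸ hne)

lemma bdStep_mono {L L' : Finset (Fin n)} (hL : L' ⊆ L) {a b : Fin n → PState}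
    (h : bdStep f L a b) : bdStep f L' a b :=
  let ⟨hs, j, hne, hj, hb, hnb⟩ := h
  ⟨hs, j, hne, fun h => hj (hL h), hb, hnb⟩

lemma bdStep_update {L : Finset (Fin n)} {c : Fin n → PState} {i : Fin n} {p : PState}
    (hi : i ∉ L) (hc : (c i).isBool) (hp : ¬ p.isBool) (hs : CoordStep f c i p) :
    bdStep f L c (update c i p) := by
  have hne : c i ≠ p := fun h => hp (h ▸ hc)
  exact ⟨mpStep_update_iff.2 ⟨hne, hs⟩, i, by simpa using hne, hi, hc, by simpa using hp⟩

def Explains (f : BN n) (zhat c : Fin n → PState) : Prop :=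
  ∀ i, ((zhat i).isBool → c i = zhat i) ∧
    (¬ (zhat i).isBool → ∃ z ∈ gamma zhat, f z i = (c i).goal)

namespace Explains

variable {zhat c : Fin n → PState} {i : Fin n} {p : PState}

lemma gamma_subset (h : Explains f zhat c) : gamma c ⊆ gamma zhat :=
  gamma_subset_gamma fun i hi => (h i).1 hi

lemma update_of_not_isBool (h : Explains f zhat c) (hz : ¬ (zhat i).isBool)
    (hi : CoordStep f c i p) : Explains f zhat (update c i p) := by
  intro j
  rcases eq_or_ne j i with rfl | hji
  · refine ⟨fun hb => absurd hb hz, fun _ => ?_⟩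
    rw [update_self]
    by_cases hp : p.isBool
    · rw [← goal_toward p.goal, ← hi.eq_toward_of_isBool hp]
      exact (h j).2 hz
    · obtain ⟨z, hzc, hfz⟩ := hi.exists_of_not_isBool hp
      exact ⟨z, h.gamma_subset hzc, hfz⟩
  · simpa [hji] using h j

lemma update_update (h : Explains f zhat c) (hp : ¬ p.isBool) (hi : CoordStep f c i p) :
    Explains f (update zhat i p) (update c i p) := by
  have hγ : gamma zhat ⊆ gamma (update zhat i p) := gamma_subset_gamma fun j hj => by
    rcases eq_or_ne j i with rfl | hji
    · rw [update_self] at hj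
      exact absurd hj hp
    · rw [update_of_ne hji]
  intro j
  rcases eq_or_ne j i with rfl | hji
  · simp only [update_self]
    refine ⟨fun hb => absurd hb hp, fun _ => ?_⟩
    obtain ⟨z, hzc, hfz⟩ := hi.exists_of_not_isBool hp
    exact ⟨z, hγ (h.gamma_subset hzc), hfz⟩
  · simp only [update_of_ne hji]
    obtain ⟨hb, hw⟩ := h j
    exact ⟨hb, fun hnb => (hw hnb).imp fun _ hz => ⟨hγ hz.1, hz.2⟩⟩

end Explains

lemma exists_closure_explains {x : Fin n → Bool} {c : Fin n → PState}
    (h : mpReachP f (embed x) c) :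
    ∃ (L : Finset (Fin n)) (zhat : Fin n → PState),
      Relation.ReflTransGen (bdStep f L) (embed x) zhat ∧ (∀ j ∉ L, ¬ (zhat j).isBool) ∧
        Explains f zhat c := by
  induction h with
  | refl =>
    exact ⟨Finset.univ, embed x, .refl, by simp,
      fun i => ⟨fun _ => rfl, fun hi => absurd (isBool_ofBool _) hi⟩⟩
  | @tail c c' _ hstep ih =>
    obtain ⟨L, zhat, hrun, hdyn, hex⟩ := ih
    obtain ⟨i, -, hsame, hi⟩ := mpStep_iff.1 hstep
    have hc' : c' = update c i (c' i) := eq_update_iff.2 ⟨rfl, fun j hj => (hsame j hj).symm⟩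
    rw [hc']
    by_cases hb : (zhat i).isBool
    · have hci : c i = zhat i := (hex i).1 hb
      have hp : ¬ (c' i).isBool := hi.not_isBool_of_isBool (hci ▸ hb)
      refine ⟨L.erase i, update zhat i (c' i), ?_, fun j hj => ?_, hex.update_update hp hi⟩
      · have hrun' : Relation.ReflTransGen (bdStep f (L.erase i)) (embed x) zhat :=
          Relation.ReflTransGen.mono (fun _ _ => bdStep_mono (L.erase_subset i)) _ _ hrun
        exact hrun'.tail <|
          bdStep_update (L.notMem_erase i) hb hp (hi.mono hci.symm hex.gamma_subset)
      · rcases eq_or_ne j i with rfl | hji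
        · simpa using hp
        · simpa [hji] using hdyn j fun hjL => hj (Finset.mem_erase.2 ⟨hji, hjL⟩)
    · exact ⟨L, zhat, hrun, hdyn, hex.update_of_not_isBool hb hi⟩

end

theorem stmt18 {n : ℕ} (f : BN n) (x : Fin n → Bool) (y : Fin n → Bool) :
    y ∈ mpReach f x ↔
      ∃ (L : Finset (Fin n)) (zhat : Fin n → PState),
        exhaustive f x L zhat ∧ y ∈ gamma zhat ∧
        ∀ i, ¬ (zhat i).isBool → ∃ z ∈ gamma zhat, f z i = y i := by
  constructor
  · intro hy
    obtain ⟨L, zhat, hrun, hdyn, hex⟩ := exists_closure_explains hy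
    refine ⟨L, zhat, ⟨hrun, fun _ ⟨_, j, _, hjL, hjb, _⟩ => hdyn j hjL hjb⟩,
      hex.gamma_subset (mem_gamma_embed y), fun i hi => ?_⟩
    simpa [embed] using (hex i).2 hi
  · rintro ⟨L, zhat, ⟨hrun, -⟩, hyz, hwit⟩
    have hx : mpReachP f (embed x) zhat := Relation.ReflTransGen.mono (fun _ _ h => h.1) _ _ hrun
    exact Relation.ReflTransGen.trans hx <| Relation.ReflTransGen.trans
      (mpReachP_redirect hwit) (mpReachP_embed (goal_redirect_of_mem_gamma hyz))
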